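/- Let Ω be a p×p real symmetric positive definite matrix with all diagonal entries equal to 1 such that: every 3×3 principal submatrix of Ω has smallest eigenvalue at least 2(5 − 2√6); every 4×4 principal submatrix of Ω has smallest eigenvalue at least 5 − 2√6; and |Ω(i,j)| ≤ 8√6 − 19 for all i ≠ j. Let ϑ > 0 and r satisfy ϑ < r < (5 + 2√6)ϑ. Then for every pair of disjoint subsets D, F of {1,…,p} with D nonempty, ρ(D, F; Ω) ≥ (ϑ + r)²/(4r). -/

import Mathlib

open Matrix

/-- `ω(D,F;Ω)`: the minimum (infimum) of
`ξᵀ(Ω_{D,D} − Ω_{D,F}(Ω_{F,F})⁻¹Ω_{F,D})ξ` over vectors `ξ ∈ ℝ^D` with `|ξ_i| ≥ 1`. -/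
noncomputable def omegaDF {p : ℕ} (Ω : Matrix (Fin p) (Fin p) ℝ)
    (D F : Finset (Fin p)) : ℝ :=
  sInf {q : ℝ | ∃ ξ : ↥D → ℝ, (∀ i, 1 ≤ |ξ i|) ∧
    q = ξ ⬝ᵥ ((Ω.submatrix (fun i : ↥D => (i : Fin p)) (fun j : ↥D => (j : Fin p))
        - Ω.submatrix (fun i : ↥D => (i : Fin p)) (fun j : ↥F => (j : Fin p))
          * (Ω.submatrix (fun i : ↥F => (i : Fin p)) (fun j : ↥F => (j : Fin p)))⁻¹
          * Ω.submatrix (fun i : ↥F => (i : Fin p)) (fun j : ↥D => (j : Fin p))) *ᵥ ξ)}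

/-- `ρ(D,F;Ω)` with parameters `ϑ, r`. -/
noncomputable def rhoDF {p : ℕ} (Ω : Matrix (Fin p) (Fin p) ℝ) (ϑ r : ℝ)
    (D F : Finset (Fin p)) : ℝ :=
  if Even D.card then
    ((D.card : ℝ) + 2 * F.card) * ϑ / 2 + omegaDF Ω D F * r / 4
  else
    ((D.card : ℝ) + 2 * F.card) * ϑ / 2 + ϑ / 2 +
      (max (Real.sqrt (omegaDF Ω D F * r) - ϑ / Real.sqrt (omegaDF Ω D F * r)) 0) ^ 2 / 4

/-- `λ_k*(Ω)`: the minimum over all `k×k` principal submatrices of `Ω` of the smallest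
eigenvalue, characterized as the minimal Rayleigh quotient over unit vectors. -/
noncomputable def lambdaStar {p : ℕ} (Ω : Matrix (Fin p) (Fin p) ℝ) (k : ℕ) : ℝ :=
  sInf {lam : ℝ | ∃ S : Finset (Fin p), S.card = k ∧ ∃ ξ : ↥S → ℝ,
    (∑ i, ξ i ^ 2) = 1 ∧
    lam = ξ ⬝ᵥ (Ω.submatrix (fun i : ↥S => (i : Fin p)) (fun j : ↥S => (j : Fin p)) *ᵥ ξ)}

/-!
Write `m = |D| + 2|F|`. Since `ϑ < r < (5 + 2√6)ϑ` places `r / ϑ` strictly between the roots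
`5 ± 2√6` of `t² - 10t + 1`, we have `(ϑ + r)² < 12ϑr`, so the term `mϑ/2` of `ρ` alone suffices
once `m ≥ 6` (even `|D|`) or `m ≥ 5` (odd `|D|`). The six remaining shapes of `(|D|, |F|)` need a
lower bound on `ω`. Completing the square in the `F`-coordinates turns the Schur complement form
into the form of `Ω` itself at a vector supported on `D ∪ F` with entries of modulus `≥ 1` on `D`.
When `|D ∪ F| ≤ 2` this is bounded via the off-diagonal bound, otherwise by `|D| λ*_{|D ∪ F|}`.
-/

open Finset

section Forms

variable {n : Type*}

def extendByZero [DecidableEq n] (S : Finset n) (x : S → ℝ) : n → ℝ :=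
  fun i => if h : i ∈ S then x ⟨i, h⟩ else 0

@[simp]
lemma extendByZero_coe [DecidableEq n] (S : Finset n) (x : S → ℝ) (i : S) :
    extendByZero S x i = x i := by
  simp [extendByZero]

lemma extendByZero_of_notMem [DecidableEq n] {S : Finset n} (x : S → ℝ) {i : n} (h : i ∉ S) :
    extendByZero S x i = 0 :=
  dif_neg h

lemma extendByZero_restrict [DecidableEq n] {S : Finset n} {w : n → ℝ}
    (hw : ∀ i ∉ S, w i = 0) : extendByZero S (fun i => w i) = w := by
  funext i
  by_cases h : i ∈ S
  · simp [extendByZero, h]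
  · rw [extendByZero_of_notMem _ h, hw i h]

lemma dotProduct_eq_sum_of_support [Fintype n] {S : Finset n} {v : n → ℝ}
    (hv : ∀ i ∉ S, v i = 0) (u : n → ℝ) : v ⬝ᵥ u = ∑ i ∈ S, v i * u i :=
  (sum_subset (subset_univ S) fun i _ hi => by rw [hv i hi, zero_mul]).symm

lemma extendByZero_dotProduct [Fintype n] [DecidableEq n] (S : Finset n) (x : S → ℝ)
    (u : n → ℝ) : extendByZero S x ⬝ᵥ u = ∑ i : S, x i * u i := by
  rw [dotProduct_eq_sum_of_support (fun i hi => extendByZero_of_notMem x hi),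
    ← sum_coe_sort S]
  simp

lemma extendByZero_dotProduct_mulVec [Fintype n] [DecidableEq n] (M : Matrix n n ℝ)
    (S T : Finset n) (x : S → ℝ) (y : T → ℝ) :
    extendByZero S x ⬝ᵥ (M *ᵥ extendByZero T y) = x ⬝ᵥ (M.submatrix (↑) (↑) *ᵥ y) := by
  rw [extendByZero_dotProduct]
  refine sum_congr rfl fun i _ => congrArg (x i * ·) ?_
  rw [mulVec, dotProduct_comm, extendByZero_dotProduct]
  simp [mulVec, dotProduct, mul_comm]

lemma dotProduct_mulVec_eq_sum_of_support [Fintype n] (M : Matrix n n ℝ) {S : Finset n}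
    {w : n → ℝ} (hw : ∀ i ∉ S, w i = 0) :
    w ⬝ᵥ (M *ᵥ w) = ∑ i ∈ S, ∑ j ∈ S, w i * M i j * w j := by
  rw [dotProduct_eq_sum_of_support hw]
  refine sum_congr rfl fun i _ => ?_
  rw [mulVec, dotProduct_comm, dotProduct_eq_sum_of_support hw, mul_sum]
  exact sum_congr rfl fun j _ => by ring

lemma dotProduct_mulVec_of_support_pair [Fintype n] [DecidableEq n] (M : Matrix n n ℝ)
    {a b : n} (hab : a ≠ b) {w : n → ℝ} (hw : ∀ i ∉ ({a, b} : Finset n), w i = 0) :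
    w ⬝ᵥ (M *ᵥ w) = M a a * w a ^ 2 + (M a b + M b a) * w a * w b + M b b * w b ^ 2 := by
  rw [dotProduct_mulVec_eq_sum_of_support M hw, sum_pair hab, sum_pair hab, sum_pair hab]
  ring

lemma dotProduct_schur_mulVec {m l : Type*} [Fintype m] [Fintype l] [DecidableEq l]
    (A : Matrix m m ℝ) (B : Matrix m l ℝ) (C : Matrix l m ℝ) {N : Matrix l l ℝ}
    (hN : IsUnit N.det) (ξ : m → ℝ) {η : l → ℝ} (hη : η = -((N⁻¹ * C) *ᵥ ξ)) :
    ξ ⬝ᵥ ((A - B * N⁻¹ * C) *ᵥ ξ)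
      = ξ ⬝ᵥ (A *ᵥ ξ) + ξ ⬝ᵥ (B *ᵥ η) + (η ⬝ᵥ (C *ᵥ ξ) + η ⬝ᵥ (N *ᵥ η)) := by
  have hNη : N *ᵥ η = -(C *ᵥ ξ) := by
    rw [hη, mulVec_neg, mulVec_mulVec, ← Matrix.mul_assoc, mul_nonsing_inv N hN,
      Matrix.one_mul]
  rw [hNη, hη]
  simp only [sub_mulVec, dotProduct_sub, mulVec_neg, dotProduct_neg, neg_dotProduct,
    mulVec_mulVec, Matrix.mul_assoc]
  ring

-- The Schur complement form at `ξ` is the full form at `ξ` extended by the minimizer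
-- `η = -(M_FF)⁻¹ M_FD ξ` of the `F`-coordinates.
lemma exists_dotProduct_mulVec_eq_schur [Fintype n] [DecidableEq n] {M : Matrix n n ℝ}
    (hM : M.PosDef) {D F : Finset n} (hDF : Disjoint D F) (ξ : D → ℝ) :
    ∃ w : n → ℝ, (∀ i ∉ D ∪ F, w i = 0) ∧ (∀ i : D, w i = ξ i) ∧
      ξ ⬝ᵥ (((M.submatrix (↑) (↑) : Matrix D D ℝ) - (M.submatrix (↑) (↑) : Matrix D F ℝ)
          * (M.submatrix (↑) (↑) : Matrix F F ℝ)⁻¹ * (M.submatrix (↑) (↑) : Matrix F D ℝ)) *ᵥ ξ)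
        = w ⬝ᵥ (M *ᵥ w) := by
  set η : F → ℝ := -(((M.submatrix (↑) (↑) : Matrix F F ℝ)⁻¹
    * (M.submatrix (↑) (↑) : Matrix F D ℝ)) *ᵥ ξ) with hη
  refine ⟨extendByZero D ξ + extendByZero F η, fun i hi => ?_, fun i => ?_, ?_⟩
  · rw [mem_union, not_or] at hi
    simp [extendByZero_of_notMem _ hi.1, extendByZero_of_notMem _ hi.2]
  · simp [extendByZero_of_notMem _ (disjoint_left.mp hDF i.2)]
  · rw [dotProduct_schur_mulVec _ _ _
      (hM.submatrix Subtype.val_injective).det_pos.ne'.isUnit ξ hη]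
    simp only [mulVec_add, dotProduct_add, add_dotProduct, extendByZero_dotProduct_mulVec]
    ring

end Forms

section Omega

variable {p : ℕ} {Ω : Matrix (Fin p) (Fin p) ℝ}

lemma le_omegaDF (hΩ : Ω.PosDef) {D F : Finset (Fin p)} (hDF : Disjoint D F) {c : ℝ}
    (h : ∀ w : Fin p → ℝ, (∀ i ∉ D ∪ F, w i = 0) → (∀ i ∈ D, 1 ≤ |w i|) →
      c ≤ w ⬝ᵥ (Ω *ᵥ w)) :
    c ≤ omegaDF Ω D F := by
  refine le_csInf ⟨_, fun _ => 1, fun _ => by simp, rfl⟩ ?_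
  rintro _ ⟨ξ, hξ, rfl⟩
  obtain ⟨w, hw, hwξ, heq⟩ := exists_dotProduct_mulVec_eq_schur hΩ hDF ξ
  rw [heq]
  exact h w hw fun i hi => hwξ ⟨i, hi⟩ ▸ hξ _

lemma omegaDF_nonneg (hΩ : Ω.PosDef) {D F : Finset (Fin p)} (hDF : Disjoint D F) :
    0 ≤ omegaDF Ω D F :=
  le_omegaDF hΩ hDF fun w _ _ => by simpa using hΩ.posSemidef.dotProduct_mulVec_nonneg w

lemma dotProduct_submatrix_mulVec_nonneg (hΩ : Ω.PosDef) (S : Finset (Fin p)) (v : S → ℝ) :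
    0 ≤ v ⬝ᵥ (Ω.submatrix (↑) (↑) *ᵥ v) := by
  simpa using (hΩ.submatrix Subtype.val_injective).posSemidef.dotProduct_mulVec_nonneg v

lemma lambdaStar_nonneg (hΩ : Ω.PosDef) (k : ℕ) : 0 ≤ lambdaStar Ω k :=
  Real.sInf_nonneg fun _ ⟨S, _, v, _, hv⟩ => hv ▸ dotProduct_submatrix_mulVec_nonneg hΩ S v

lemma lambdaStar_mul_sum_sq_le (hΩ : Ω.PosDef) (S : Finset (Fin p)) (v : S → ℝ) :
    lambdaStar Ω S.card * ∑ i, v i ^ 2 ≤ v ⬝ᵥ (Ω.submatrix (↑) (↑) *ᵥ v) := by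
  rcases (sum_nonneg fun i _ => sq_nonneg (v i) : 0 ≤ ∑ i, v i ^ 2).eq_or_lt with hN | hN
  · rw [← hN, mul_zero]
    exact dotProduct_submatrix_mulVec_nonneg hΩ S v
  set c := (√(∑ i, v i ^ 2))⁻¹
  have hc : c ^ 2 * ∑ i, v i ^ 2 = 1 := by
    rw [inv_pow, Real.sq_sqrt hN.le, inv_mul_cancel₀ hN.ne']
  have hle : lambdaStar Ω S.card ≤ c ^ 2 * (v ⬝ᵥ (Ω.submatrix (↑) (↑) *ᵥ v)) := by
    refine csInf_le ⟨0, fun _ ⟨T, _, u, _, hu⟩ => hu ▸ dotProduct_submatrix_mulVec_nonneg hΩ T u⟩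
      ⟨S, rfl, c • v, ?_, ?_⟩
    · simpa only [Pi.smul_apply, smul_eq_mul, mul_pow, ← mul_sum] using hc
    · rw [mulVec_smul, dotProduct_smul, smul_dotProduct, smul_eq_mul, smul_eq_mul]
      ring
  calc lambdaStar Ω S.card * ∑ i, v i ^ 2
      ≤ c ^ 2 * (v ⬝ᵥ (Ω.submatrix (↑) (↑) *ᵥ v)) * ∑ i, v i ^ 2 := by gcongr
    _ = v ⬝ᵥ (Ω.submatrix (↑) (↑) *ᵥ v) := by rw [mul_right_comm, hc, one_mul]

lemma lambdaStar_mul_card_le_omegaDF (hΩ : Ω.PosDef) {D F : Finset (Fin p)}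
    (hDF : Disjoint D F) : lambdaStar Ω (D ∪ F).card * D.card ≤ omegaDF Ω D F := by
  refine le_omegaDF hΩ hDF fun w hw hD => ?_
  have hcard : (D.card : ℝ) ≤ ∑ i : ↥(D ∪ F), w i ^ 2 := calc
    (D.card : ℝ) = ∑ i ∈ D, 1 := by simp
    _ ≤ ∑ i ∈ D, w i ^ 2 := sum_le_sum fun i hi => (one_le_sq_iff_one_le_abs _).mpr (hD i hi)
    _ ≤ ∑ i ∈ D ∪ F, w i ^ 2 :=
      sum_le_sum_of_subset_of_nonneg subset_union_left fun _ _ _ => sq_nonneg _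
    _ = ∑ i : ↥(D ∪ F), w i ^ 2 := (sum_coe_sort _ _).symm
  calc lambdaStar Ω (D ∪ F).card * D.card
      ≤ lambdaStar Ω (D ∪ F).card * ∑ i : ↥(D ∪ F), w i ^ 2 :=
        mul_le_mul_of_nonneg_left hcard (lambdaStar_nonneg hΩ _)
    _ ≤ w ⬝ᵥ (Ω *ᵥ w) := (lambdaStar_mul_sum_sq_le hΩ (D ∪ F) fun i => w i).trans_eq <| by
        rw [← extendByZero_dotProduct_mulVec, extendByZero_restrict hw]

lemma le_omegaDF_singleton (hΩ : Ω.PosDef) (a : Fin p) : Ω a a ≤ omegaDF Ω {a} ∅ := by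
  refine le_omegaDF hΩ (disjoint_empty_right _) fun w hw hD => ?_
  have ha : 1 ≤ w a ^ 2 := (one_le_sq_iff_one_le_abs _).mpr (hD a (mem_singleton_self a))
  rw [dotProduct_mulVec_eq_sum_of_support Ω (S := {a}) (by simpa using hw)]
  simp only [sum_singleton]
  nlinarith [hΩ.diag_pos (i := a)]

variable {a b : Fin p} {β : ℝ}

lemma two_mul_one_sub_le_omegaDF_pair (hΩ : Ω.PosDef) (hab : a ≠ b) (ha : Ω a a = 1)
    (hb : Ω b b = 1) (hβ : β ≤ 1) (hab' : |Ω a b| ≤ β) (hba' : |Ω b a| ≤ β) :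
    2 * (1 - β) ≤ omegaDF Ω {a, b} ∅ := by
  refine le_omegaDF hΩ (disjoint_empty_right _) fun w hw hD => ?_
  have hwa : 1 ≤ w a ^ 2 := (one_le_sq_iff_one_le_abs _).mpr (hD a (by simp))
  have hwb : 1 ≤ w b ^ 2 := (one_le_sq_iff_one_le_abs _).mpr (hD b (by simp))
  rw [dotProduct_mulVec_of_support_pair Ω hab (by simpa using hw), ha, hb]
  rw [abs_le] at hab' hba'
  -- `t ↦ x² + t x y + y²` is affine, so `|t| ≤ 2β` reduces it to `x² ± 2βxy + y²`
  nlinarith [mul_nonneg (by linarith : 0 ≤ 2 * β + (Ω a b + Ω b a)) (sq_nonneg (w a + w b)),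
    mul_nonneg (by linarith : 0 ≤ 2 * β - (Ω a b + Ω b a)) (sq_nonneg (w a - w b)),
    mul_nonneg (by linarith : 0 ≤ 1 - β) (by linarith : 0 ≤ w a ^ 2 + w b ^ 2 - 2)]

lemma one_sub_sq_le_omegaDF_singleton_singleton (hΩ : Ω.PosDef) (hab : a ≠ b)
    (ha : Ω a a = 1) (hb : Ω b b = 1) (hβ : β ≤ 1) (hab' : |Ω a b| ≤ β)
    (hba' : |Ω b a| ≤ β) :
    1 - β ^ 2 ≤ omegaDF Ω {a} {b} := by
  refine le_omegaDF hΩ (disjoint_singleton.mpr hab) fun w hw hD => ?_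
  have hwa : 1 ≤ w a ^ 2 := (one_le_sq_iff_one_le_abs _).mpr (hD a (mem_singleton_self a))
  rw [dotProduct_mulVec_of_support_pair Ω hab (by simpa using hw), ha, hb]
  have hβ0 : 0 ≤ β := (abs_nonneg _).trans hab'
  rw [abs_le] at hab' hba'
  have ht : ((Ω a b + Ω b a) / 2) ^ 2 ≤ β ^ 2 := sq_le_sq' (by linarith) (by linarith)
  -- complete the square in `w b`
  nlinarith [sq_nonneg (w b + (Ω a b + Ω b a) / 2 * w a),
    mul_nonneg (by nlinarith : 0 ≤ 1 - ((Ω a b + Ω b a) / 2) ^ 2)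
      (by linarith : 0 ≤ w a ^ 2 - 1)]

end Omega

section Numerics

variable {κ ϑ r : ℝ}

lemma pos_of_mul_lt_of_lt (hκ0 : 0 < κ) (hκ1 : κ < 1) (hκr : κ * r < ϑ) (hϑr : ϑ < r) :
    0 < ϑ ∧ 0 < r := by
  have hr : 0 < r := by nlinarith
  exact ⟨by nlinarith, hr⟩

-- `κ` and `1 / κ` are the roots of `t ^ 2 - 10 t + 1`.
lemma sq_add_le_twelve_mul (hκ : κ ^ 2 = 10 * κ - 1) (hκ0 : 0 < κ) (hκ1 : κ < 1)
    (hκr : κ * r < ϑ) (hϑr : ϑ < r) : (ϑ + r) ^ 2 ≤ 12 * ϑ * r := by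
  obtain ⟨hϑ, hr⟩ := pos_of_mul_lt_of_lt hκ0 hκ1 hκr hϑr
  have hfactor : κ * (12 * ϑ * r - (ϑ + r) ^ 2) = (ϑ - κ * r) * (r - κ * ϑ) := by
    linear_combination (-(ϑ * r)) * hκ
  have hpos : 0 < (ϑ - κ * r) * (r - κ * ϑ) := mul_pos (by linarith) (by nlinarith)
  nlinarith

lemma sq_add_div_le_of_even (hκ : κ ^ 2 = 10 * κ - 1) (hκ0 : 0 < κ) (hκ1 : κ < 1)
    (hκr : κ * r < ϑ) (hϑr : ϑ < r) {m ω : ℝ} (hm : 2 ≤ m) (hω0 : 0 ≤ ω)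
    (hω : 2 * (6 - m) * κ ≤ ω) :
    (ϑ + r) ^ 2 / (4 * r) ≤ m * ϑ / 2 + ω * r / 4 := by
  obtain ⟨hϑ, hr⟩ := pos_of_mul_lt_of_lt hκ0 hκ1 hκr hϑr
  have h6 := sq_add_le_twelve_mul hκ hκ0 hκ1 hκr hϑr
  -- the endpoint `m = 2`: `(r - ϑ) ^ 2 < ((1 - κ) r) ^ 2 = 8 κ r ^ 2`
  have h2 : (ϑ + r) ^ 2 ≤ 4 * ϑ * r + 8 * κ * r ^ 2 := by
    nlinarith [pow_le_pow_left₀ (by linarith : 0 ≤ r - ϑ)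
      (by linarith : r - ϑ ≤ (1 - κ) * r) 2]
  have hωr := mul_le_mul_of_nonneg_right hω (sq_nonneg r)
  rw [div_le_iff₀ (by positivity)]
  rcases le_total m 6 with hm6 | hm6
  · -- the bound is affine in `m`, so it interpolates between `m = 2` and `m = 6`
    nlinarith [mul_le_mul_of_nonneg_left h2 (by linarith : (0 : ℝ) ≤ 6 - m),
      mul_le_mul_of_nonneg_left h6 (by linarith : (0 : ℝ) ≤ m - 2)]
  · nlinarith [mul_le_mul_of_nonneg_right hm6 (mul_pos hϑ hr).le,
      mul_nonneg hω0 (sq_nonneg r)]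

lemma sub_two_mul_add_sq_div_le_max_sq {x y : ℝ} (hϑ : 0 < ϑ) (hy : ϑ ≤ y) (hyx : y ≤ x) :
    y - 2 * ϑ + ϑ ^ 2 / y ≤ max (√x - ϑ / √x) 0 ^ 2 := by
  have hy0 : 0 < √y := Real.sqrt_pos.mpr (hϑ.trans_le hy)
  have hmono : √y - ϑ / √y ≤ √x - ϑ / √x :=
    sub_le_sub (Real.sqrt_le_sqrt hyx) (div_le_div_of_nonneg_left hϑ.le hy0 (Real.sqrt_le_sqrt hyx))
  have hnonneg : 0 ≤ √y - ϑ / √y := by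
    rw [sub_nonneg, div_le_iff₀ hy0, ← sq, Real.sq_sqrt (hϑ.le.trans hy)]
    exact hy
  calc y - 2 * ϑ + ϑ ^ 2 / y = (√y - ϑ / √y) ^ 2 := by
        rw [sub_sq, div_pow, Real.sq_sqrt (hϑ.le.trans hy), mul_assoc, mul_div_cancel₀ _ hy0.ne']
    _ ≤ max (√x - ϑ / √x) 0 ^ 2 := pow_le_pow_left₀ hnonneg (hmono.trans (le_max_left _ _)) 2

lemma sq_add_div_le_of_odd_of_five_le (h12 : (ϑ + r) ^ 2 ≤ 12 * ϑ * r) (hϑ : 0 < ϑ)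
    (hr : 0 < r) {m : ℝ} (hm : 5 ≤ m) (ω : ℝ) :
    (ϑ + r) ^ 2 / (4 * r) ≤ m * ϑ / 2 + ϑ / 2 + max (√(ω * r) - ϑ / √(ω * r)) 0 ^ 2 / 4 := by
  rw [div_le_iff₀ (by positivity)]
  nlinarith [mul_le_mul_of_nonneg_right hm (mul_pos hϑ hr).le,
    mul_nonneg (sq_nonneg (max (√(ω * r) - ϑ / √(ω * r)) 0)) hr.le]

lemma sq_add_div_le_of_odd_of_eq_one (hϑ : 0 < ϑ) (hϑr : ϑ < r) {m ω : ℝ} (hm : m = 1)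
    (hω : 1 ≤ ω) :
    (ϑ + r) ^ 2 / (4 * r) ≤ m * ϑ / 2 + ϑ / 2 + max (√(ω * r) - ϑ / √(ω * r)) 0 ^ 2 / 4 := by
  have hr : 0 < r := hϑ.trans hϑr
  have hM := sub_two_mul_add_sq_div_le_max_sq hϑ hϑr.le (by nlinarith : r ≤ ω * r)
  have hsq : (r - 2 * ϑ + ϑ ^ 2 / r) * r = (r - ϑ) ^ 2 := by
    field_simp
    ring
  rw [div_le_iff₀ (by positivity), hm]
  nlinarith [mul_le_mul_of_nonneg_right hM hr.le]

lemma sq_add_div_le_of_odd_of_eq_three (hϑ : 0 < ϑ) (hϑr : ϑ < r) (hr10 : r ≤ 10 * ϑ)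
    {m ω : ℝ} (hm : m = 3) (hω : 3 / 5 ≤ ω) :
    (ϑ + r) ^ 2 / (4 * r) ≤ m * ϑ / 2 + ϑ / 2 + max (√(ω * r) - ϑ / √(ω * r)) 0 ^ 2 / 4 := by
  have hr : 0 < r := hϑ.trans hϑr
  rw [div_le_iff₀ (by positivity), hm]
  rcases le_or_gt ϑ (3 / 5 * r) with hsmall | hbig
  · have hM := sub_two_mul_add_sq_div_le_max_sq hϑ hsmall
      (by nlinarith : 3 / 5 * r ≤ ω * r)
    have hsq : (3 / 5 * r - 2 * ϑ + ϑ ^ 2 / (3 / 5 * r)) * r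
        = 3 / 5 * r ^ 2 - 2 * ϑ * r + 5 / 3 * ϑ ^ 2 := by
      field_simp
    nlinarith [mul_le_mul_of_nonneg_right hM hr.le, mul_le_mul_of_nonneg_left hr10 hr.le]
  · nlinarith [mul_nonneg (by linarith : 0 ≤ r - ϑ) (by linarith : 0 ≤ 5 * ϑ - 3 * r),
      mul_nonneg (sq_nonneg (max (√(ω * r) - ϑ / √(ω * r)) 0)) hr.le]

end Numerics

section Cases

variable {p : ℕ} {Ω : Matrix (Fin p) (Fin p) ℝ} {κ ϑ r : ℝ} {D F : Finset (Fin p)}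

lemma le_rhoDF_of_even (hκ : κ ^ 2 = 10 * κ - 1) (hκ0 : 0 < κ) (hκ1 : κ < 1)
    (hκr : κ * r < ϑ) (hϑr : ϑ < r) (hΩ : Ω.PosDef) (hdiag : ∀ i, Ω i i = 1)
    (hlam3 : 2 * κ ≤ lambdaStar Ω 3) (hlam4 : κ ≤ lambdaStar Ω 4)
    (hoff : ∀ i j, i ≠ j → |Ω i j| ≤ 1 - 4 * κ) (hD : D.Nonempty) (hDF : Disjoint D F)
    (hev : Even D.card) :
    (ϑ + r) ^ 2 / (4 * r) ≤ rhoDF Ω ϑ r D F := by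
  rw [rhoDF, if_pos hev]
  have hlam := lambdaStar_mul_card_le_omegaDF hΩ hDF
  rw [card_union_of_disjoint hDF] at hlam
  have hD1 := hD.card_pos
  obtain ⟨k, hk⟩ := hev
  refine sq_add_div_le_of_even hκ hκ0 hκ1 hκr hϑr ?_ (omegaDF_nonneg hΩ hDF) ?_
  · exact_mod_cast (by omega : 2 ≤ D.card + 2 * F.card)
  obtain h | ⟨hd, hf⟩ | ⟨hd, hf⟩ | ⟨hd, hf⟩ : 6 ≤ D.card + 2 * F.card ∨
      (D.card = 2 ∧ F.card = 0) ∨ (D.card = 2 ∧ F.card = 1) ∨ (D.card = 4 ∧ F.card = 0) := by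
    omega
  · have h6 : (6 : ℝ) ≤ D.card + 2 * F.card := by exact_mod_cast h
    nlinarith [omegaDF_nonneg hΩ hDF]
  · obtain ⟨a, b, hab, rfl⟩ := card_eq_two.mp hd
    obtain rfl := card_eq_zero.mp hf
    have := two_mul_one_sub_le_omegaDF_pair hΩ hab (hdiag a) (hdiag b) (by linarith)
      (hoff a b hab) (hoff b a hab.symm)
    rw [hd, card_empty]
    push_cast
    linarith
  · rw [hd, hf] at hlam ⊢
    push_cast at hlam ⊢
    linarith
  · rw [hd, hf] at hlam ⊢
    push_cast at hlam ⊢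
    linarith

lemma le_rhoDF_of_odd (hκ : κ ^ 2 = 10 * κ - 1) (hκ10 : 1 / 10 ≤ κ) (hκ1 : κ < 1)
    (hκr : κ * r < ϑ) (hϑr : ϑ < r) (hΩ : Ω.PosDef) (hdiag : ∀ i, Ω i i = 1)
    (hlam3 : 2 * κ ≤ lambdaStar Ω 3) (hoff : ∀ i j, i ≠ j → |Ω i j| ≤ 1 - 4 * κ)
    (hDF : Disjoint D F) (hodd : ¬Even D.card) :
    (ϑ + r) ^ 2 / (4 * r) ≤ rhoDF Ω ϑ r D F := by
  rw [rhoDF, if_neg hodd]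
  have hκ0 : 0 < κ := by linarith
  obtain ⟨hϑ, hr⟩ := pos_of_mul_lt_of_lt hκ0 hκ1 hκr hϑr
  have hr10 : r ≤ 10 * ϑ := by nlinarith
  obtain ⟨k, hk⟩ := Nat.not_even_iff_odd.mp hodd
  obtain h | ⟨hd, hf⟩ | ⟨hd, hf⟩ | ⟨hd, hf⟩ : 5 ≤ D.card + 2 * F.card ∨
      (D.card = 1 ∧ F.card = 0) ∨ (D.card = 1 ∧ F.card = 1) ∨ (D.card = 3 ∧ F.card = 0) := by
    omega
  · exact sq_add_div_le_of_odd_of_five_le (sq_add_le_twelve_mul hκ hκ0 hκ1 hκr hϑr) hϑ hr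
      (by exact_mod_cast h) _
  · obtain ⟨a, rfl⟩ := card_eq_one.mp hd
    obtain rfl := card_eq_zero.mp hf
    exact sq_add_div_le_of_odd_of_eq_one hϑ hϑr (by simp)
      ((hdiag a).symm.trans_le (le_omegaDF_singleton hΩ a))
  · obtain ⟨a, rfl⟩ := card_eq_one.mp hd
    obtain ⟨b, rfl⟩ := card_eq_one.mp hf
    have hab : a ≠ b := disjoint_singleton.mp hDF
    have := one_sub_sq_le_omegaDF_singleton_singleton hΩ hab (hdiag a) (hdiag b) (by linarith)
      (hoff a b hab) (hoff b a hab.symm)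
    exact sq_add_div_le_of_odd_of_eq_three hϑ hϑr hr10 (by norm_num) (by nlinarith)
  · have hlam := lambdaStar_mul_card_le_omegaDF hΩ hDF
    rw [card_union_of_disjoint hDF, hd, hf] at hlam
    push_cast at hlam
    exact sq_add_div_le_of_odd_of_eq_three hϑ hϑr hr10 (by rw [hd, hf]; norm_num) (by linarith)

end Cases

theorem rho_lower_bound_cor_entrywise2_general
    (p : ℕ) (Ω : Matrix (Fin p) (Fin p) ℝ) (hpd : Ω.PosDef)
    (hdiag : ∀ i, Ω i i = 1)
    (hlam3 : 2 * (5 - 2 * Real.sqrt 6) ≤ lambdaStar Ω 3)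
    (hlam4 : 5 - 2 * Real.sqrt 6 ≤ lambdaStar Ω 4)
    (hoff : ∀ i j, i ≠ j → |Ω i j| ≤ 8 * Real.sqrt 6 - 19)
    (ϑ r : ℝ) (h1 : ϑ < r) (h2 : r < (5 + 2 * Real.sqrt 6) * ϑ)
    (D F : Finset (Fin p)) (hD : D.Nonempty) (hDF : Disjoint D F) :
    (ϑ + r) ^ 2 / (4 * r) ≤ rhoDF Ω ϑ r D F := by
  have hs : √6 ^ 2 = 6 := Real.sq_sqrt (by norm_num)
  have hs0 : 0 ≤ √6 := Real.sqrt_nonneg 6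
  set κ := 5 - 2 * √6
  have hκ : κ ^ 2 = 10 * κ - 1 := by linear_combination 4 * hs
  have hκ10 : 1 / 10 ≤ κ := by nlinarith
  have hκ1 : κ < 1 := by nlinarith
  have hκr : κ * r < ϑ := by
    nlinarith [mul_lt_mul_of_pos_left h2 (by linarith : 0 < κ)]
  have hoff' : ∀ i j, i ≠ j → |Ω i j| ≤ 1 - 4 * κ :=
    fun i j hij => (hoff i j hij).trans_eq (by ring)
  by_cases hev : Even D.card
  · exact le_rhoDF_of_even hκ (by linarith) hκ1 hκr h1 hpd hdiag hlam3 hlam4 hoff' hD hDF hev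
  · exact le_rhoDF_of_odd hκ hκ10 hκ1 hκr h1 hpd hdiag hlam3 hoff' hDF hev

/-- Let `Ω` be a `p×p` real symmetric positive definite matrix with unit
diagonal such that every 3×3 principal submatrix has smallest eigenvalue `≥ 2(5 − 2√6)`,
every 4×4 principal submatrix has smallest eigenvalue `≥ 5 − 2√6`, and
`|Ω(i,j)| ≤ 8√6 − 19` for `i ≠ j`. Let `0 < ϑ` and `ϑ < r < (5 + 2√6)ϑ`. Then for every
pair of disjoint subsets `D, F` with `D` nonempty, `ρ(D,F;Ω) ≥ (ϑ + r)²/(4r)`. -/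
theorem rho_lower_bound_cor_entrywise2
    (p : ℕ) (Ω : Matrix (Fin p) (Fin p) ℝ) (hsymm : Ω.IsSymm) (hpd : Ω.PosDef)
    (hdiag : ∀ i, Ω i i = 1)
    (hlam3 : 2 * (5 - 2 * Real.sqrt 6) ≤ lambdaStar Ω 3)
    (hlam4 : 5 - 2 * Real.sqrt 6 ≤ lambdaStar Ω 4)
    (hoff : ∀ i j, i ≠ j → |Ω i j| ≤ 8 * Real.sqrt 6 - 19)
    (ϑ r : ℝ) (h0 : 0 < ϑ) (h1 : ϑ < r) (h2 : r < (5 + 2 * Real.sqrt 6) * ϑ)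
    (D F : Finset (Fin p)) (hD : D.Nonempty) (hDF : Disjoint D F) :
    (ϑ + r) ^ 2 / (4 * r) ≤ rhoDF Ω ϑ r D F :=
  rho_lower_bound_cor_entrywise2_general p Ω hpd hdiag hlam3 hlam4 hoff ϑ r h1 h2 D F hD hDF
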